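/- Let (E;E^H,E^V;M) be a set-theoretic double vector bundle over a field 𝕜 with core K, all of whose fibres are finite-dimensional. Then the pairing ⟨Φ,Ψ⟩ = ⟨Ψ,ξ⟩ − ⟨Φ,ξ⟩ between E^{*V} and E^{*H} over K* induces an isomorphism of double vector bundles from (E^{*V};E^H,K*;M) to ((E^{*H})^{*V};K*,E^H;M) (the dual of the horizontal dual taken over K*, with E^H identified with its double dual) which is the identity on the side bundles K* and E^H but is −id on the cores (E^V)*. -/

import Mathlib

/-- A set-theoretic vector bundle structure over `𝕜` on a set `E` with base set `B`:
all operations are total functions, and the vector space axioms are required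
fibrewise (i.e. conditionally on equality of projections). -/
structure VBOn (𝕜 : Type*) [Field 𝕜] (E : Type*) (B : Type*) where
  proj : E → B
  add : E → E → E
  smul : 𝕜 → E → E
  zero : B → E
  proj_add : ∀ {e e' : E}, proj e = proj e' → proj (add e e') = proj e
  proj_smul : ∀ (t : 𝕜) (e : E), proj (smul t e) = proj e
  proj_zero : ∀ b, proj (zero b) = b
  add_assoc : ∀ {e₁ e₂ e₃ : E}, proj e₁ = proj e₂ → proj e₂ = proj e₃ →
    add (add e₁ e₂) e₃ = add e₁ (add e₂ e₃)
  add_comm : ∀ {e e' : E}, proj e = proj e' → add e e' = add e' e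
  zero_add : ∀ e, add (zero (proj e)) e = e
  add_neg : ∀ e, add e (smul (-1) e) = zero (proj e)
  one_smul : ∀ e, smul 1 e = e
  mul_smul : ∀ (s t : 𝕜) (e : E), smul (s * t) e = smul s (smul t e)
  smul_add : ∀ (t : 𝕜) {e e' : E}, proj e = proj e' →
    smul t (add e e') = add (smul t e) (smul t e')
  add_smul : ∀ (s t : 𝕜) (e : E), smul (s + t) e = add (smul s e) (smul t e)

namespace VBOn

variable {𝕜 E B : Type*} [Field 𝕜]

theorem zero_smul' (v : VBOn 𝕜 E B) (e : E) : v.smul 0 e = v.zero (v.proj e) := by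
  have h : (0 : 𝕜) = 1 + (-1) := by ring
  rw [h, v.add_smul, v.one_smul, v.add_neg]

theorem smul_zero' (v : VBOn 𝕜 E B) (t : 𝕜) (b : B) : v.smul t (v.zero b) = v.zero b := by
  have h0 : v.zero b = v.smul 0 (v.zero b) := by rw [v.zero_smul', v.proj_zero]
  rw [h0, ← v.mul_smul, mul_zero]

/-- The fibre of a set-theoretic vector bundle over a point of the base. -/
def Fib (v : VBOn 𝕜 E B) (b : B) : Type _ := {e : E // v.proj e = b}

instance (v : VBOn 𝕜 E B) (b : B) : Zero (v.Fib b) :=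
  ⟨⟨v.zero b, v.proj_zero b⟩⟩

instance (v : VBOn 𝕜 E B) (b : B) : Add (v.Fib b) :=
  ⟨fun e e' => ⟨v.add e.val e'.val, (v.proj_add (e.prop.trans e'.prop.symm)).trans e.prop⟩⟩

instance (v : VBOn 𝕜 E B) (b : B) : Neg (v.Fib b) :=
  ⟨fun e => ⟨v.smul (-1) e.val, (v.proj_smul _ _).trans e.prop⟩⟩

instance (v : VBOn 𝕜 E B) (b : B) : SMul 𝕜 (v.Fib b) :=
  ⟨fun t e => ⟨v.smul t e.val, (v.proj_smul t e.val).trans e.prop⟩⟩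

@[simp] theorem Fib.add_val (v : VBOn 𝕜 E B) {b : B} (e e' : v.Fib b) :
    (e + e').val = v.add e.val e'.val := rfl

@[simp] theorem Fib.zero_val (v : VBOn 𝕜 E B) {b : B} :
    (0 : v.Fib b).val = v.zero b := rfl

@[simp] theorem Fib.neg_val (v : VBOn 𝕜 E B) {b : B} (e : v.Fib b) :
    (-e).val = v.smul (-1) e.val := rfl

@[simp] theorem Fib.smul_val (v : VBOn 𝕜 E B) {b : B} (t : 𝕜) (e : v.Fib b) :
    (t • e).val = v.smul t e.val := rfl

instance (v : VBOn 𝕜 E B) (b : B) : AddCommGroup (v.Fib b) where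
  add_assoc e₁ e₂ e₃ := Subtype.ext (by
    show v.add (v.add e₁.val e₂.val) e₃.val = v.add e₁.val (v.add e₂.val e₃.val)
    exact v.add_assoc (e₁.prop.trans e₂.prop.symm) (e₂.prop.trans e₃.prop.symm))
  zero_add e := Subtype.ext (by
    show v.add (v.zero b) e.val = e.val
    have h := v.zero_add e.val
    rwa [e.prop] at h)
  add_zero e := Subtype.ext (by
    show v.add e.val (v.zero b) = e.val
    rw [v.add_comm (e.prop.trans (v.proj_zero b).symm)]
    have h := v.zero_add e.val
    rwa [e.prop] at h)
  neg_add_cancel e := Subtype.ext (by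
    show v.add (v.smul (-1) e.val) e.val = v.zero b
    rw [v.add_comm (v.proj_smul (-1) e.val), v.add_neg, e.prop])
  add_comm e e' := Subtype.ext (by
    show v.add e.val e'.val = v.add e'.val e.val
    exact v.add_comm (e.prop.trans e'.prop.symm))
  nsmul := nsmulRec
  zsmul := zsmulRec

instance (v : VBOn 𝕜 E B) (b : B) : Module 𝕜 (v.Fib b) where
  one_smul e := Subtype.ext (v.one_smul e.val)
  mul_smul s t e := Subtype.ext (v.mul_smul s t e.val)
  smul_zero t := Subtype.ext (v.smul_zero' t b)
  zero_smul e := Subtype.ext (by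
    show v.smul 0 e.val = v.zero b
    have h := v.zero_smul' e.val
    rwa [e.prop] at h)
  smul_add t e e' := Subtype.ext (by
    show v.smul t (v.add e.val e'.val) = v.add (v.smul t e.val) (v.smul t e'.val)
    exact v.smul_add t (e.prop.trans e'.prop.symm))
  add_smul s t e := Subtype.ext (v.add_smul s t e.val)

end VBOn

/-- A set-theoretic double vector bundle `(E; E^H, E^V; M)` over a field `𝕜`:
side vector bundles `E^H` and `E^V` over `M` (families of `𝕜`-vector spaces) and a
set `E` with two set-theoretic vector bundle structures, `vbV` over (the total space
of) `E^H` — with projection `q̃_V`, addition `+_V` and zeros `0̃^V` — and `vbH` over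
`E^V` — with projection `q̃_H`, addition `+_H` and zeros `0̃^H` — such that each
operation of either structure is a morphism of vector bundles with respect to the
other (in particular the interchange law holds), and the double projection
`E → E^H ×_M E^V` is surjective. -/
structure DVB (𝕜 : Type*) [Field 𝕜] {M : Type*} (E : Type*)
    (EH : M → Type*) (EV : M → Type*)
    [∀ m, AddCommGroup (EH m)] [∀ m, Module 𝕜 (EH m)]
    [∀ m, AddCommGroup (EV m)] [∀ m, Module 𝕜 (EV m)] where
  /-- the vector bundle structure over `E^H`. -/
  vbV : VBOn 𝕜 E (Σ m, EH m)
  /-- the vector bundle structure over `E^V`. -/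
  vbH : VBOn 𝕜 E (Σ m, EV m)
  /-- the two projections cover the same point of `M`. -/
  compat : ∀ (e : E) (m : M) (X : EH m), vbV.proj e = ⟨m, X⟩ →
    ∃ x : EV m, vbH.proj e = ⟨m, x⟩
  projH_addV : ∀ {e e' : E} {m : M} {y y' : EV m}, vbV.proj e = vbV.proj e' →
    vbH.proj e = ⟨m, y⟩ → vbH.proj e' = ⟨m, y'⟩ →
    vbH.proj (vbV.add e e') = ⟨m, y + y'⟩
  projH_smulV : ∀ (t : 𝕜) {e : E} {m : M} {y : EV m}, vbH.proj e = ⟨m, y⟩ →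
    vbH.proj (vbV.smul t e) = ⟨m, t • y⟩
  projH_zeroV : ∀ (m : M) (X : EH m), vbH.proj (vbV.zero ⟨m, X⟩) = ⟨m, (0 : EV m)⟩
  projV_addH : ∀ {e e' : E} {m : M} {Y Y' : EH m}, vbH.proj e = vbH.proj e' →
    vbV.proj e = ⟨m, Y⟩ → vbV.proj e' = ⟨m, Y'⟩ →
    vbV.proj (vbH.add e e') = ⟨m, Y + Y'⟩
  projV_smulH : ∀ (t : 𝕜) {e : E} {m : M} {Y : EH m}, vbV.proj e = ⟨m, Y⟩ →
    vbV.proj (vbH.smul t e) = ⟨m, t • Y⟩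
  projV_zeroH : ∀ (m : M) (x : EV m), vbV.proj (vbH.zero ⟨m, x⟩) = ⟨m, (0 : EH m)⟩
  zeroV_add : ∀ (m : M) (X X' : EH m),
    vbV.zero ⟨m, X + X'⟩ = vbH.add (vbV.zero ⟨m, X⟩) (vbV.zero ⟨m, X'⟩)
  zeroV_smul : ∀ (m : M) (t : 𝕜) (X : EH m),
    vbV.zero ⟨m, t • X⟩ = vbH.smul t (vbV.zero ⟨m, X⟩)
  zeroH_add : ∀ (m : M) (x x' : EV m),
    vbH.zero ⟨m, x + x'⟩ = vbV.add (vbH.zero ⟨m, x⟩) (vbH.zero ⟨m, x'⟩)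
  zeroH_smul : ∀ (m : M) (t : 𝕜) (x : EV m),
    vbH.zero ⟨m, t • x⟩ = vbV.smul t (vbH.zero ⟨m, x⟩)
  double_zero : ∀ m : M, vbV.zero ⟨m, (0 : EH m)⟩ = vbH.zero ⟨m, (0 : EV m)⟩
  /-- the interchange law `(ξ₁ +_V ξ₂) +_H (ξ₃ +_V ξ₄) = (ξ₁ +_H ξ₃) +_V (ξ₂ +_H ξ₄)`. -/
  interchange : ∀ {e₁ e₂ e₃ e₄ : E}, vbV.proj e₁ = vbV.proj e₂ →
    vbV.proj e₃ = vbV.proj e₄ → vbH.proj e₁ = vbH.proj e₃ → vbH.proj e₂ = vbH.proj e₄ →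
    vbH.add (vbV.add e₁ e₂) (vbV.add e₃ e₄) = vbV.add (vbH.add e₁ e₃) (vbH.add e₂ e₄)
  smulV_addH : ∀ (t : 𝕜) {e e' : E}, vbH.proj e = vbH.proj e' →
    vbV.smul t (vbH.add e e') = vbH.add (vbV.smul t e) (vbV.smul t e')
  smulH_addV : ∀ (t : 𝕜) {e e' : E}, vbV.proj e = vbV.proj e' →
    vbH.smul t (vbV.add e e') = vbV.add (vbH.smul t e) (vbH.smul t e')
  smul_commute : ∀ (s t : 𝕜) (e : E), vbV.smul s (vbH.smul t e) = vbH.smul t (vbV.smul s e)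
  /-- surjectivity of the double projection. -/
  double_surj : ∀ (m : M) (X : EH m) (x : EV m),
    ∃ e : E, vbV.proj e = ⟨m, X⟩ ∧ vbH.proj e = ⟨m, x⟩

namespace DVB

variable {𝕜 M E : Type*} [Field 𝕜] {EH EV : M → Type*}
  [∀ m, AddCommGroup (EH m)] [∀ m, Module 𝕜 (EH m)]
  [∀ m, AddCommGroup (EV m)] [∀ m, Module 𝕜 (EV m)]

/-- The core of a double vector bundle, as a submodule of the fibre of `E → E^H`
over `0 ∈ E^H_m`: the elements projecting to the two zeros over `m`. -/
def Core (D : DVB 𝕜 E EH EV) (m : M) :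
    Submodule 𝕜 (D.vbV.Fib ⟨m, (0 : EH m)⟩) where
  carrier := {e | D.vbH.proj e.val = ⟨m, (0 : EV m)⟩}
  add_mem' := by
    intro a b ha hb
    have h := D.projH_addV (a.prop.trans b.prop.symm) ha hb
    simpa using h
  zero_mem' := by
    simpa using D.projH_zeroV m 0
  smul_mem' := by
    intro t a ha
    have h := D.projH_smulV t ha
    simpa using h

/-- The core fibre at `m`, as a type. -/
abbrev CoreT (D : DVB 𝕜 E EH EV) (m : M) : Type _ := ↥(D.Core m)

theorem mem_core_iff (D : DVB 𝕜 E EH EV) {m : M} (e : D.vbV.Fib ⟨m, (0 : EH m)⟩) :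
    e ∈ D.Core m ↔ D.vbH.proj e.val = ⟨m, (0 : EV m)⟩ := Iff.rfl

theorem core_projH (D : DVB 𝕜 E EH EV) {m : M} (k : D.CoreT m) :
    D.vbH.proj k.val.val = ⟨m, (0 : EV m)⟩ := k.prop

theorem core_projV (D : DVB 𝕜 E EH EV) {m : M} (k : D.CoreT m) :
    D.vbV.proj k.val.val = ⟨m, (0 : EH m)⟩ := k.val.prop

theorem zeroV_addH_core_mem (D : DVB 𝕜 E EH EV) {m : M} (X : EH m) (k : D.CoreT m) :
    D.vbV.proj (D.vbH.add (D.vbV.zero ⟨m, X⟩) k.val.val) = ⟨m, X⟩ := by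
  have h1 : D.vbH.proj (D.vbV.zero ⟨m, X⟩) = ⟨m, (0 : EV m)⟩ := D.projH_zeroV m X
  have h := D.projV_addH (h1.trans (D.core_projH k).symm)
    (D.vbV.proj_zero ⟨m, X⟩) (D.core_projV k)
  simpa using h

theorem zeroH_addV_core_mem (D : DVB 𝕜 E EH EV) {m : M} (x : EV m) (k : D.CoreT m) :
    D.vbH.proj (D.vbV.add (D.vbH.zero ⟨m, x⟩) k.val.val) = ⟨m, x⟩ := by
  have h1 : D.vbV.proj (D.vbH.zero ⟨m, x⟩) = ⟨m, (0 : EH m)⟩ := D.projV_zeroH m x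
  have h := D.projH_addV (h1.trans (D.core_projV k).symm)
    (D.vbH.proj_zero ⟨m, x⟩) (D.core_projH k)
  simpa using h

/-- The projection `q̃_V^{(*)} : E^{*V} → K*` of the vertical dual, as a bare pairing:
`⟨q̃_V^{(*)}(Φ), k⟩ = ⟨Φ, 0̃^V_X +_H k̄⟩`. -/
def evCoreV (D : DVB 𝕜 E EH EV) {m : M} {X : EH m}
    (Φ : Module.Dual 𝕜 (D.vbV.Fib ⟨m, X⟩)) (k : D.CoreT m) : 𝕜 :=
  Φ ⟨D.vbH.add (D.vbV.zero ⟨m, X⟩) k.val.val, D.zeroV_addH_core_mem X k⟩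

/-- The projection `q̃_H^{(*)} : E^{*H} → K*` of the horizontal dual, as a bare
pairing: `⟨q̃_H^{(*)}(Ψ), k⟩ = ⟨Ψ, 0̃^H_x +_V k̄⟩`. -/
def evCoreH (D : DVB 𝕜 E EH EV) {m : M} {x : EV m}
    (Ψ : Module.Dual 𝕜 (D.vbH.Fib ⟨m, x⟩)) (k : D.CoreT m) : 𝕜 :=
  Ψ ⟨D.vbV.add (D.vbH.zero ⟨m, x⟩) k.val.val, D.zeroH_addV_core_mem x k⟩

end DVB

/-- `W` (with evaluation pairing `ev`) is *the* vertical dual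
`(E^{*V}; E^H, K*; M)` of the double vector bundle `D = (E; E^H, E^V; M)`:
its fibre over `X ∈ E^H_m` is the dual of the fibre `q̃_V^{-1}(X)` (expressed via the
evaluation `ev` and the representability condition), its projection to `K*` is given
by `⟨q̃_V^{(*)}(Φ), k⟩ = ⟨Φ, 0̃^V_X +_H k̄⟩`, and its bundle operations over `K*` are
characterized by `⟨Φ ∔ Φ', ξ +_H ξ'⟩ = ⟨Φ, ξ⟩ + ⟨Φ', ξ'⟩` and
`⟨t ∙ Φ, t ·_H ξ⟩ = t⟨Φ, ξ⟩`. -/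
structure IsVDualDVB {𝕜 M E : Type*} [Field 𝕜] {EH EV : M → Type*}
    [∀ m, AddCommGroup (EH m)] [∀ m, Module 𝕜 (EH m)]
    [∀ m, AddCommGroup (EV m)] [∀ m, Module 𝕜 (EV m)]
    (D : DVB 𝕜 E EH EV) {F : Type*}
    (W : DVB 𝕜 F EH (fun m => Module.Dual 𝕜 (D.CoreT m)))
    (ev : F → E → 𝕜) : Prop where
  ev_addV : ∀ {m : M} {X : EH m} {Φ : F}, W.vbV.proj Φ = ⟨m, X⟩ →
    ∀ {ξ ξ' : E}, D.vbV.proj ξ = ⟨m, X⟩ → D.vbV.proj ξ' = ⟨m, X⟩ →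
    ev Φ (D.vbV.add ξ ξ') = ev Φ ξ + ev Φ ξ'
  ev_smulV : ∀ {m : M} {X : EH m} {Φ : F}, W.vbV.proj Φ = ⟨m, X⟩ →
    ∀ (t : 𝕜) {ξ : E}, D.vbV.proj ξ = ⟨m, X⟩ →
    ev Φ (D.vbV.smul t ξ) = t * ev Φ ξ
  addV_ev : ∀ {Φ Φ' : F}, W.vbV.proj Φ = W.vbV.proj Φ' →
    ∀ {ξ : E}, D.vbV.proj ξ = W.vbV.proj Φ →
    ev (W.vbV.add Φ Φ') ξ = ev Φ ξ + ev Φ' ξ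
  smulV_ev : ∀ (t : 𝕜) {Φ : F} {ξ : E}, D.vbV.proj ξ = W.vbV.proj Φ →
    ev (W.vbV.smul t Φ) ξ = t * ev Φ ξ
  /-- the fibre of `W` over `X` is exactly the dual space of the fibre of `E` over `X`. -/
  represent : ∀ (m : M) (X : EH m) (f : Module.Dual 𝕜 (D.vbV.Fib ⟨m, X⟩)),
    ∃! Φ : W.vbV.Fib ⟨m, X⟩, ∀ ξ : D.vbV.Fib ⟨m, X⟩, ev Φ.val ξ.val = f ξ
  /-- the projection to `K*` is `⟨q̃_V^{(*)}(Φ), k⟩ = ⟨Φ, 0̃^V_X +_H k̄⟩`. -/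
  proj_hat : ∀ {m : M} {X : EH m} {Φ : F}, W.vbV.proj Φ = ⟨m, X⟩ →
    ∀ {κ : Module.Dual 𝕜 (D.CoreT m)}, W.vbH.proj Φ = ⟨m, κ⟩ →
    ∀ k : D.CoreT m, κ k = ev Φ (D.vbH.add (D.vbV.zero ⟨m, X⟩) k.val.val)
  hat_add : ∀ {Φ Φ' : F}, W.vbH.proj Φ = W.vbH.proj Φ' →
    ∀ {ξ ξ' : E}, D.vbH.proj ξ = D.vbH.proj ξ' →
    D.vbV.proj ξ = W.vbV.proj Φ → D.vbV.proj ξ' = W.vbV.proj Φ' →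
    ev (W.vbH.add Φ Φ') (D.vbH.add ξ ξ') = ev Φ ξ + ev Φ' ξ'
  hat_smul : ∀ (t : 𝕜) {Φ : F} {ξ : E}, D.vbV.proj ξ = W.vbV.proj Φ →
    ev (W.vbH.smul t Φ) (D.vbH.smul t ξ) = t * ev Φ ξ

/-- `U` (with evaluation pairing `ev`) is *the* horizontal dual
`(E^{*H}; K*, E^V; M)` of the double vector bundle `D = (E; E^H, E^V; M)`; this is
the mirror image of `IsVDualDVB`; the fibre of `U` over `x ∈ E^V_m` is the dual of
the fibre `q̃_H^{-1}(x)`, its projection to `K*` is given by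
`⟨q̃_H^{(*)}(Ψ), k⟩ = ⟨Ψ, 0̃^H_x +_V k̄⟩`, and its bundle operations over `K*` (the
`vbV` structure of `U`) are characterized by
`⟨Ψ ∔ Ψ', ξ +_V ξ'⟩ = ⟨Ψ, ξ⟩ + ⟨Ψ', ξ'⟩` and `⟨t ∙ Ψ, t ·_V ξ⟩ = t⟨Ψ, ξ⟩`. -/
structure IsHDualDVB {𝕜 M E : Type*} [Field 𝕜] {EH EV : M → Type*}
    [∀ m, AddCommGroup (EH m)] [∀ m, Module 𝕜 (EH m)]
    [∀ m, AddCommGroup (EV m)] [∀ m, Module 𝕜 (EV m)]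
    (D : DVB 𝕜 E EH EV) {F : Type*}
    (U : DVB 𝕜 F (fun m => Module.Dual 𝕜 (D.CoreT m)) EV)
    (ev : F → E → 𝕜) : Prop where
  ev_addH : ∀ {m : M} {x : EV m} {Ψ : F}, U.vbH.proj Ψ = ⟨m, x⟩ →
    ∀ {ξ ξ' : E}, D.vbH.proj ξ = ⟨m, x⟩ → D.vbH.proj ξ' = ⟨m, x⟩ →
    ev Ψ (D.vbH.add ξ ξ') = ev Ψ ξ + ev Ψ ξ'
  ev_smulH : ∀ {m : M} {x : EV m} {Ψ : F}, U.vbH.proj Ψ = ⟨m, x⟩ →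
    ∀ (t : 𝕜) {ξ : E}, D.vbH.proj ξ = ⟨m, x⟩ →
    ev Ψ (D.vbH.smul t ξ) = t * ev Ψ ξ
  addH_ev : ∀ {Ψ Ψ' : F}, U.vbH.proj Ψ = U.vbH.proj Ψ' →
    ∀ {ξ : E}, D.vbH.proj ξ = U.vbH.proj Ψ →
    ev (U.vbH.add Ψ Ψ') ξ = ev Ψ ξ + ev Ψ' ξ
  smulH_ev : ∀ (t : 𝕜) {Ψ : F} {ξ : E}, D.vbH.proj ξ = U.vbH.proj Ψ →
    ev (U.vbH.smul t Ψ) ξ = t * ev Ψ ξ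
  represent : ∀ (m : M) (x : EV m) (f : Module.Dual 𝕜 (D.vbH.Fib ⟨m, x⟩)),
    ∃! Ψ : U.vbH.Fib ⟨m, x⟩, ∀ ξ : D.vbH.Fib ⟨m, x⟩, ev Ψ.val ξ.val = f ξ
  proj_hat : ∀ {m : M} {x : EV m} {Ψ : F}, U.vbH.proj Ψ = ⟨m, x⟩ →
    ∀ {κ : Module.Dual 𝕜 (D.CoreT m)}, U.vbV.proj Ψ = ⟨m, κ⟩ →
    ∀ k : D.CoreT m, κ k = ev Ψ (D.vbV.add (D.vbH.zero ⟨m, x⟩) k.val.val)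
  hat_add : ∀ {Ψ Ψ' : F}, U.vbV.proj Ψ = U.vbV.proj Ψ' →
    ∀ {ξ ξ' : E}, D.vbV.proj ξ = D.vbV.proj ξ' →
    D.vbH.proj ξ = U.vbH.proj Ψ → D.vbH.proj ξ' = U.vbH.proj Ψ' →
    ev (U.vbV.add Ψ Ψ') (D.vbV.add ξ ξ') = ev Ψ ξ + ev Ψ' ξ'
  hat_smul : ∀ (t : 𝕜) {Ψ : F} {ξ : E}, D.vbH.proj ξ = U.vbH.proj Ψ →
    ev (U.vbV.smul t Ψ) (D.vbV.smul t ξ) = t * ev Ψ ξ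

/-! ### Auxiliary lemmas -/

theorem sigma_snd_eq {M : Type*} {T : M → Type*} {m : M} {a b : T m}
    (h : (⟨m, a⟩ : Σ m, T m) = ⟨m, b⟩) : a = b :=
  eq_of_heq (Sigma.mk.inj_iff.mp h).2

namespace VBOn

variable {𝕜 E B : Type*} [Field 𝕜] (v : VBOn 𝕜 E B)

theorem add_zero' {e : E} {b : B} (h : v.proj e = b) : v.add e (v.zero b) = e := by
  subst h
  rw [v.add_comm (v.proj_zero _).symm, v.zero_add]

theorem zero_add' {e : E} {b : B} (h : v.proj e = b) : v.add (v.zero b) e = e := by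
  subst h; exact v.zero_add e

theorem add_sub' {a b : E} (h : v.proj a = v.proj b) :
    v.add a (v.add b (v.smul (-1) a)) = b := by
  let A : v.Fib (v.proj a) := ⟨a, rfl⟩
  let Bf : v.Fib (v.proj a) := ⟨b, h.symm⟩
  have habel : A + (Bf + -A) = Bf := by abel
  exact congrArg Subtype.val habel

end VBOn

namespace DVB

variable {𝕜 M : Type*} [Field 𝕜] {E₀ : Type*} {A B : M → Type*}
  [∀ m, AddCommGroup (A m)] [∀ m, Module 𝕜 (A m)]
  [∀ m, AddCommGroup (B m)] [∀ m, Module 𝕜 (B m)]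
  (D : DVB 𝕜 E₀ A B)

/-- From the horizontal projection one can recover the base point of the
vertical projection. -/
theorem projV_over {m : M} {x : B m} {e : E₀} (h : D.vbH.proj e = ⟨m, x⟩) :
    ∃ X : A m, D.vbV.proj e = ⟨m, X⟩ := by
  rcases hp : D.vbV.proj e with ⟨m', X'⟩
  obtain ⟨x', hx'⟩ := D.compat e m' X' hp
  obtain ⟨rfl, -⟩ := Sigma.mk.inj_iff.mp (hx'.symm.trans h)
  exact ⟨X', rfl⟩

theorem splitV {m : M} {X : A m} {x x' : B m} {a b : E₀}
    (haV : D.vbV.proj a = ⟨m, X⟩) (hbV : D.vbV.proj b = ⟨m, X⟩)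
    (haH : D.vbH.proj a = ⟨m, x⟩) (hbH : D.vbH.proj b = ⟨m, x'⟩) :
    ∃ c : E₀, D.vbV.proj c = ⟨m, X⟩ ∧ D.vbH.proj c = ⟨m, x' - x⟩ ∧
      b = D.vbV.add a c := by
  have hproj : D.vbV.proj b = D.vbV.proj (D.vbV.smul (-1) a) := by
    rw [D.vbV.proj_smul, hbV, haV]
  refine ⟨D.vbV.add b (D.vbV.smul (-1) a), ?_, ?_, (D.vbV.add_sub' (haV.trans hbV.symm)).symm⟩
  · rw [D.vbV.proj_add hproj, hbV]
  · have := D.projH_addV hproj hbH (D.projH_smulV (-1) haH)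
    simpa [neg_one_smul, sub_eq_add_neg] using this

theorem splitH {m : M} {x : B m} {X X' : A m} {a b : E₀}
    (haH : D.vbH.proj a = ⟨m, x⟩) (hbH : D.vbH.proj b = ⟨m, x⟩)
    (haV : D.vbV.proj a = ⟨m, X⟩) (hbV : D.vbV.proj b = ⟨m, X'⟩) :
    ∃ c : E₀, D.vbH.proj c = ⟨m, x⟩ ∧ D.vbV.proj c = ⟨m, X' - X⟩ ∧
      b = D.vbH.add a c := by
  have hproj : D.vbH.proj b = D.vbH.proj (D.vbH.smul (-1) a) := by
    rw [D.vbH.proj_smul, hbH, haH]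
  refine ⟨D.vbH.add b (D.vbH.smul (-1) a), ?_, ?_, (D.vbH.add_sub' (haH.trans hbH.symm)).symm⟩
  · rw [D.vbH.proj_add hproj, hbH]
  · have := D.projV_addH hproj hbV (D.projV_smulH (-1) haV)
    simpa [neg_one_smul, sub_eq_add_neg] using this

/-- An element over `(X, 0)` is `0̃^V_X +_H k̄` for a core element `k`. -/
theorem coreH_decomp {m : M} {X : A m} {δ : E₀}
    (h1 : D.vbV.proj δ = ⟨m, X⟩) (h2 : D.vbH.proj δ = ⟨m, (0 : B m)⟩) :
    ∃ k : D.CoreT m, δ = D.vbH.add (D.vbV.zero ⟨m, X⟩) k.val.val := by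
  obtain ⟨c, hcH, hcV, hc⟩ := D.splitH (D.projH_zeroV m X) h2 (D.vbV.proj_zero _) h1
  rw [sub_self] at hcV
  exact ⟨⟨⟨c, hcV⟩, hcH⟩, hc⟩

/-- An element over `(0, x)` is `0̃^H_x +_V k̄` for a core element `k`. -/
theorem coreV_decomp {m : M} {x : B m} {δ : E₀}
    (h1 : D.vbV.proj δ = ⟨m, (0 : A m)⟩) (h2 : D.vbH.proj δ = ⟨m, x⟩) :
    ∃ k : D.CoreT m, δ = D.vbV.add (D.vbH.zero ⟨m, x⟩) k.val.val := by
  obtain ⟨c, hcV, hcH, hc⟩ := D.splitV (D.projV_zeroH m x) h1 (D.vbH.proj_zero _) h2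
  rw [sub_self] at hcH
  exact ⟨⟨⟨c, hcV⟩, hcH⟩, hc⟩

theorem addV_zero_core {m : M} {e : E₀} (h : D.vbV.proj e = ⟨m, (0 : A m)⟩) :
    D.vbV.add (D.vbH.zero ⟨m, (0 : B m)⟩) e = e := by
  rw [← D.double_zero]
  exact D.vbV.zero_add' h

theorem addH_zero_core {m : M} {e : E₀} (h : D.vbH.proj e = ⟨m, (0 : B m)⟩) :
    D.vbH.add (D.vbV.zero ⟨m, (0 : A m)⟩) e = e := by
  rw [D.double_zero]
  exact D.vbH.zero_add' h

end DVB

namespace IsVDualDVB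

variable {𝕜 M : Type*} [Field 𝕜] {E₀ : Type*} {A B : M → Type*}
  [∀ m, AddCommGroup (A m)] [∀ m, Module 𝕜 (A m)]
  [∀ m, AddCommGroup (B m)] [∀ m, Module 𝕜 (B m)]
  {D : DVB 𝕜 E₀ A B} {F₀ : Type*}
  {W : DVB 𝕜 F₀ A (fun m => Module.Dual 𝕜 (D.CoreT m))}
  {ev : F₀ → E₀ → 𝕜} (h : IsVDualDVB D W ev)

include h

theorem zero_ev {m : M} {X : A m} {ξ : E₀} (hξ : D.vbV.proj ξ = ⟨m, X⟩) :
    ev (W.vbV.zero ⟨m, X⟩) ξ = 0 := by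
  have h0 : W.vbV.zero ⟨m, X⟩ = W.vbV.smul 0 (W.vbV.zero ⟨m, X⟩) :=
    (W.vbV.smul_zero' 0 _).symm
  rw [h0, h.smulV_ev 0 (by rw [hξ, W.vbV.proj_zero]), zero_mul]

theorem ev_zeroV {m : M} {X : A m} {Φ : F₀} (hΦ : W.vbV.proj Φ = ⟨m, X⟩) :
    ev Φ (D.vbV.zero ⟨m, X⟩) = 0 := by
  have h0 : D.vbV.zero ⟨m, X⟩ = D.vbV.smul 0 (D.vbV.zero ⟨m, X⟩) :=
    (D.vbV.smul_zero' 0 _).symm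
  rw [h0, h.ev_smulV hΦ 0 (D.vbV.proj_zero _), zero_mul]

theorem zeroH_ev_zeroH {m : M} {κ : Module.Dual 𝕜 (D.CoreT m)} {x : B m} :
    ev (W.vbH.zero ⟨m, κ⟩) (D.vbH.zero ⟨m, x⟩) = 0 := by
  have h1 : W.vbH.zero ⟨m, κ⟩ = W.vbH.smul 0 (W.vbH.zero ⟨m, κ⟩) :=
    (W.vbH.smul_zero' 0 _).symm
  have h2 : D.vbH.zero ⟨m, x⟩ = D.vbH.smul 0 (D.vbH.zero ⟨m, x⟩) :=
    (D.vbH.smul_zero' 0 _).symm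
  rw [h1, h2, h.hat_smul 0 (by rw [D.projV_zeroH, W.projV_zeroH]), zero_mul]

theorem ev_core {m : M} {κ : Module.Dual 𝕜 (D.CoreT m)} {Φ : F₀}
    (hΦV : W.vbV.proj Φ = ⟨m, (0 : A m)⟩) (hΦH : W.vbH.proj Φ = ⟨m, κ⟩)
    (k : D.CoreT m) : ev Φ k.val.val = κ k := by
  have h1 := h.proj_hat hΦV hΦH k
  rw [D.addH_zero_core k.prop] at h1; exact h1.symm

theorem ext' {m : M} {X : A m} {Φ₁ Φ₂ : F₀}
    (h1 : W.vbV.proj Φ₁ = ⟨m, X⟩) (h2 : W.vbV.proj Φ₂ = ⟨m, X⟩)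
    (hev : ∀ ξ : E₀, D.vbV.proj ξ = ⟨m, X⟩ → ev Φ₁ ξ = ev Φ₂ ξ) : Φ₁ = Φ₂ := by
  let f : Module.Dual 𝕜 (D.vbV.Fib ⟨m, X⟩) :=
    { toFun := fun ξ => ev Φ₁ ξ.val
      map_add' := fun ξ ξ' => h.ev_addV h1 ξ.prop ξ'.prop
      map_smul' := fun t ξ => h.ev_smulV h1 t ξ.prop }
  obtain ⟨Phat, hPhat, huniq⟩ := h.represent m X f
  have e1 : (⟨Φ₁, h1⟩ : W.vbV.Fib ⟨m, X⟩) = Phat := huniq _ (fun ξ => rfl)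
  have e2 : (⟨Φ₂, h2⟩ : W.vbV.Fib ⟨m, X⟩) = Phat :=
    huniq _ (fun ξ => (hev ξ.val ξ.prop).symm)
  exact congrArg Subtype.val (e1.trans e2.symm)

end IsVDualDVB

namespace IsHDualDVB

variable {𝕜 M : Type*} [Field 𝕜] {E₀ : Type*} {A B : M → Type*}
  [∀ m, AddCommGroup (A m)] [∀ m, Module 𝕜 (A m)]
  [∀ m, AddCommGroup (B m)] [∀ m, Module 𝕜 (B m)]
  {D : DVB 𝕜 E₀ A B} {F₀ : Type*}
  {U : DVB 𝕜 F₀ (fun m => Module.Dual 𝕜 (D.CoreT m)) B}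
  {ev : F₀ → E₀ → 𝕜} (h : IsHDualDVB D U ev)

include h

theorem zero_ev {m : M} {x : B m} {ξ : E₀} (hξ : D.vbH.proj ξ = ⟨m, x⟩) :
    ev (U.vbH.zero ⟨m, x⟩) ξ = 0 := by
  have h0 : U.vbH.zero ⟨m, x⟩ = U.vbH.smul 0 (U.vbH.zero ⟨m, x⟩) :=
    (U.vbH.smul_zero' 0 _).symm
  rw [h0, h.smulH_ev 0 (by rw [hξ, U.vbH.proj_zero]), zero_mul]

theorem ev_zeroH {m : M} {x : B m} {Ψ : F₀} (hΨ : U.vbH.proj Ψ = ⟨m, x⟩) :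
    ev Ψ (D.vbH.zero ⟨m, x⟩) = 0 := by
  have h0 : D.vbH.zero ⟨m, x⟩ = D.vbH.smul 0 (D.vbH.zero ⟨m, x⟩) :=
    (D.vbH.smul_zero' 0 _).symm
  rw [h0, h.ev_smulH hΨ 0 (D.vbH.proj_zero _), zero_mul]

theorem zeroV_ev_zeroV {m : M} {κ : Module.Dual 𝕜 (D.CoreT m)} {X : A m} :
    ev (U.vbV.zero ⟨m, κ⟩) (D.vbV.zero ⟨m, X⟩) = 0 := by
  have h1 : U.vbV.zero ⟨m, κ⟩ = U.vbV.smul 0 (U.vbV.zero ⟨m, κ⟩) :=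
    (U.vbV.smul_zero' 0 _).symm
  have h2 : D.vbV.zero ⟨m, X⟩ = D.vbV.smul 0 (D.vbV.zero ⟨m, X⟩) :=
    (D.vbV.smul_zero' 0 _).symm
  rw [h1, h2, h.hat_smul 0 (by rw [D.projH_zeroV, U.projH_zeroV]), zero_mul]

theorem ev_core {m : M} {κ : Module.Dual 𝕜 (D.CoreT m)} {Ψ : F₀}
    (hΨH : U.vbH.proj Ψ = ⟨m, (0 : B m)⟩) (hΨV : U.vbV.proj Ψ = ⟨m, κ⟩)
    (k : D.CoreT m) : ev Ψ k.val.val = κ k := by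
  have h1 := h.proj_hat hΨH hΨV k
  rw [D.addV_zero_core k.val.prop] at h1; exact h1.symm

theorem ext' {m : M} {x : B m} {Ψ₁ Ψ₂ : F₀}
    (h1 : U.vbH.proj Ψ₁ = ⟨m, x⟩) (h2 : U.vbH.proj Ψ₂ = ⟨m, x⟩)
    (hev : ∀ ξ : E₀, D.vbH.proj ξ = ⟨m, x⟩ → ev Ψ₁ ξ = ev Ψ₂ ξ) : Ψ₁ = Ψ₂ := by
  let f : Module.Dual 𝕜 (D.vbH.Fib ⟨m, x⟩) :=
    { toFun := fun ξ => ev Ψ₁ ξ.val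
      map_add' := fun ξ ξ' => h.ev_addH h1 ξ.prop ξ'.prop
      map_smul' := fun t ξ => h.ev_smulH h1 t ξ.prop }
  obtain ⟨Phat, hPhat, huniq⟩ := h.represent m x f
  have e1 : (⟨Ψ₁, h1⟩ : U.vbH.Fib ⟨m, x⟩) = Phat := huniq _ (fun ξ => rfl)
  have e2 : (⟨Ψ₂, h2⟩ : U.vbH.Fib ⟨m, x⟩) = Phat :=
    huniq _ (fun ξ => (hev ξ.val ξ.prop).symm)
  exact congrArg Subtype.val (e1.trans e2.symm)

end IsHDualDVB

section Main

variable {𝕜 M E : Type*} [Field 𝕜] {EH EV : M → Type*}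
  [∀ m, AddCommGroup (EH m)] [∀ m, Module 𝕜 (EH m)]
  [∀ m, AddCommGroup (EV m)] [∀ m, Module 𝕜 (EV m)]
  {F F' F₂ : Type*}

/-- The defining property of the image `Θ` of `Φ` under `θ`. -/
def PairProp (D : DVB 𝕜 E EH EV)
    (W : DVB 𝕜 F EH (fun m => Module.Dual 𝕜 (D.CoreT m))) (ev : F → E → 𝕜)
    (U : DVB 𝕜 F' (fun m => Module.Dual 𝕜 (D.CoreT m)) EV) (ev' : F' → E → 𝕜)
    (Z : DVB 𝕜 F₂ (fun m => Module.Dual 𝕜 (D.CoreT m))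
      (fun m => Module.Dual 𝕜 (U.CoreT m)))
    (ev₂ : F₂ → F' → 𝕜) (Φ : F) (Θ : F₂) : Prop :=
  Z.vbV.proj Θ = W.vbH.proj Φ ∧
  ∀ Ψ : F', U.vbV.proj Ψ = W.vbH.proj Φ →
    ∀ ξ : E, D.vbV.proj ξ = W.vbV.proj Φ → D.vbH.proj ξ = U.vbH.proj Ψ →
      ev₂ Θ Ψ = ev' Ψ ξ - ev Φ ξ

variable {D : DVB 𝕜 E EH EV}
  {W : DVB 𝕜 F EH (fun m => Module.Dual 𝕜 (D.CoreT m))} {ev : F → E → 𝕜}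
  {U : DVB 𝕜 F' (fun m => Module.Dual 𝕜 (D.CoreT m)) EV} {ev' : F' → E → 𝕜}
  {Z : DVB 𝕜 F₂ (fun m => Module.Dual 𝕜 (D.CoreT m))
    (fun m => Module.Dual 𝕜 (U.CoreT m))}
  {ev₂ : F₂ → F' → 𝕜}
  (hW : IsVDualDVB D W ev) (hU : IsHDualDVB D U ev') (hZ : IsVDualDVB U Z ev₂)

include hW hU hZ

/-- The horizontal projection of `Θ` is characterized by evaluation of the core of
`E^{*H}` on `0̃^V_X`. -/
theorem mu_spec {Φ : F} {Θ : F₂} {m : M} {X : EH m}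
    {κ : Module.Dual 𝕜 (D.CoreT m)} {μ : Module.Dual 𝕜 (U.CoreT m)}
    (hP : PairProp D W ev U ev' Z ev₂ Φ Θ)
    (hΦV : W.vbV.proj Φ = ⟨m, X⟩) (hΦH : W.vbH.proj Φ = ⟨m, κ⟩)
    (hΘH : Z.vbH.proj Θ = ⟨m, μ⟩) :
    ∀ Ψc : U.CoreT m, μ Ψc = ev' Ψc.val.val (D.vbV.zero ⟨m, X⟩) := by
  intro Ψc
  have hΘV : Z.vbV.proj Θ = ⟨m, κ⟩ := hP.1.trans hΦH
  have h1 := hZ.proj_hat hΘV hΘH Ψc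
  have hAV : U.vbV.proj (U.vbH.add (U.vbV.zero ⟨m, κ⟩) Ψc.val.val) = ⟨m, κ⟩ :=
    U.zeroV_addH_core_mem κ Ψc
  have hAH : U.vbH.proj (U.vbH.add (U.vbV.zero ⟨m, κ⟩) Ψc.val.val)
      = ⟨m, (0 : EV m)⟩ :=
    (U.vbH.proj_add ((U.projH_zeroV m κ).trans (U.core_projH Ψc).symm)).trans
      (U.projH_zeroV m κ)
  have h2 := hP.2 _ (hAV.trans hΦH.symm) (D.vbV.zero ⟨m, X⟩)
    ((D.vbV.proj_zero _).trans hΦV.symm) ((D.projH_zeroV m X).trans hAH.symm)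
  have h4 := hU.addH_ev ((U.projH_zeroV m κ).trans (U.core_projH Ψc).symm)
    (ξ := D.vbV.zero ⟨m, X⟩) ((D.projH_zeroV m X).trans (U.projH_zeroV m κ).symm)
  rw [h1, h2, h4, hW.ev_zeroV hΦV, hU.zeroV_ev_zeroV]
  ring

/-- `Θ` is uniquely determined by `Φ`. -/
theorem pairProp_unique {Φ : F} {Θ₁ Θ₂ : F₂}
    (h1 : PairProp D W ev U ev' Z ev₂ Φ Θ₁)
    (h2 : PairProp D W ev U ev' Z ev₂ Φ Θ₂) : Θ₁ = Θ₂ := by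
  rcases hΦV : W.vbV.proj Φ with ⟨m, X⟩
  obtain ⟨κ, hΦH⟩ := W.compat Φ m X hΦV
  refine hZ.ext' (h1.1.trans hΦH) (h2.1.trans hΦH) ?_
  intro Ψ hΨ
  obtain ⟨x, hx⟩ := U.compat Ψ m κ hΨ
  obtain ⟨ξ, hξV, hξH⟩ := D.double_surj m X x
  rw [h1.2 Ψ (hΨ.trans hΦH.symm) ξ (hξV.trans hΦV.symm) (hξH.trans hx.symm),
    h2.2 Ψ (hΨ.trans hΦH.symm) ξ (hξV.trans hΦV.symm) (hξH.trans hx.symm)]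

/-- The value `ev' Ψ ξ - ev Φ ξ` does not depend on the choice of `ξ`. -/
theorem wd {Φ : F} {m : M} {X : EH m} {κ : Module.Dual 𝕜 (D.CoreT m)}
    (hΦV : W.vbV.proj Φ = ⟨m, X⟩) (hΦH : W.vbH.proj Φ = ⟨m, κ⟩)
    {Ψ : F'} (hΨV : U.vbV.proj Ψ = ⟨m, κ⟩) {ξ₁ ξ₂ : E}
    (h1V : D.vbV.proj ξ₁ = ⟨m, X⟩) (h2V : D.vbV.proj ξ₂ = ⟨m, X⟩)
    (h1H : D.vbH.proj ξ₁ = U.vbH.proj Ψ) (h2H : D.vbH.proj ξ₂ = U.vbH.proj Ψ) :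
    ev' Ψ ξ₂ - ev Φ ξ₂ = ev' Ψ ξ₁ - ev Φ ξ₁ := by
  obtain ⟨x, hΨH⟩ := U.compat Ψ m κ hΨV
  rw [hΨH] at h1H h2H
  obtain ⟨δ, hδV, hδH, hξ₂⟩ := D.splitV h1V h2V h1H h2H
  rw [sub_self] at hδH
  obtain ⟨k, hk⟩ := D.coreH_decomp hδV hδH
  have e1 : ev Φ ξ₂ = ev Φ ξ₁ + ev Φ δ := by
    rw [hξ₂]; exact hW.ev_addV hΦV h1V hδV
  have e2 : ev Φ δ = κ k := by rw [hk]; exact (hW.proj_hat hΦV hΦH k).symm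
  have hΨ0 : U.vbV.add Ψ (U.vbV.zero ⟨m, κ⟩) = Ψ := U.vbV.add_zero' hΨV
  have e3 : ev' Ψ ξ₂ = ev' Ψ ξ₁ + ev' (U.vbV.zero ⟨m, κ⟩) δ := by
    conv_lhs => rw [← hΨ0, hξ₂]
    exact hU.hat_add (hΨV.trans (U.vbV.proj_zero _).symm) (h1V.trans hδV.symm)
      (h1H.trans hΨH.symm) (hδH.trans (U.projH_zeroV m κ).symm)
  have e4 : ev' (U.vbV.zero ⟨m, κ⟩) δ = κ k := by
    rw [hk, hU.ev_addH (U.projH_zeroV m κ) (D.projH_zeroV m X) k.prop,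
      hU.zeroV_ev_zeroV, hU.ev_core (U.projH_zeroV m κ) (U.vbV.proj_zero _) k]
    ring
  rw [e1, e2, e3, e4]; ring

/-- Existence of the image of `Φ`. -/
theorem exists_theta (Φ : F) : ∃ Θ : F₂, PairProp D W ev U ev' Z ev₂ Φ Θ := by
  rcases hΦV : W.vbV.proj Φ with ⟨m, X⟩
  obtain ⟨κ, hΦH⟩ := W.compat Φ m X hΦV
  have hx : ∀ Ψ : U.vbV.Fib ⟨m, κ⟩, ∃ x : EV m, U.vbH.proj Ψ.val = ⟨m, x⟩ :=
    fun Ψ => U.compat Ψ.val m κ Ψ.prop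
  choose xof hxof using hx
  have hxi : ∀ Ψ : U.vbV.Fib ⟨m, κ⟩, ∃ ξ : E,
      D.vbV.proj ξ = ⟨m, X⟩ ∧ D.vbH.proj ξ = ⟨m, xof Ψ⟩ :=
    fun Ψ => D.double_surj m X (xof Ψ)
  choose ξof hξV hξH using hxi
  set f0 : U.vbV.Fib ⟨m, κ⟩ → 𝕜 :=
    fun Ψ => ev' Ψ.val (ξof Ψ) - ev Φ (ξof Ψ) with hf0
  have f0_spec : ∀ (Ψ : U.vbV.Fib ⟨m, κ⟩) (ξ : E), D.vbV.proj ξ = ⟨m, X⟩ →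
      D.vbH.proj ξ = U.vbH.proj Ψ.val → f0 Ψ = ev' Ψ.val ξ - ev Φ ξ :=
    fun Ψ ξ hV hH =>
      wd hW hU hZ hΦV hΦH Ψ.prop hV (hξV Ψ) hH ((hξH Ψ).trans (hxof Ψ).symm)
  have hadd : ∀ Ψ Ψ' : U.vbV.Fib ⟨m, κ⟩, f0 (Ψ + Ψ') = f0 Ψ + f0 Ψ' := by
    intro Ψ Ψ'
    have hV'' : D.vbV.proj (D.vbV.add (ξof Ψ) (ξof Ψ')) = ⟨m, X⟩ :=
      (D.vbV.proj_add ((hξV Ψ).trans (hξV Ψ').symm)).trans (hξV Ψ)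
    have hH'' : D.vbH.proj (D.vbV.add (ξof Ψ) (ξof Ψ')) = U.vbH.proj (Ψ + Ψ').val := by
      rw [D.projH_addV ((hξV Ψ).trans (hξV Ψ').symm) (hξH Ψ) (hξH Ψ')]
      exact (U.projH_addV (Ψ.prop.trans Ψ'.prop.symm) (hxof Ψ) (hxof Ψ')).symm
    rw [f0_spec (Ψ + Ψ') _ hV'' hH'', VBOn.Fib.add_val,
      hU.hat_add (Ψ.prop.trans Ψ'.prop.symm) ((hξV Ψ).trans (hξV Ψ').symm)
        ((hξH Ψ).trans (hxof Ψ).symm) ((hξH Ψ').trans (hxof Ψ').symm),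
      hW.ev_addV hΦV (hξV Ψ) (hξV Ψ')]
    show _ = ev' Ψ.val (ξof Ψ) - ev Φ (ξof Ψ) + (ev' Ψ'.val (ξof Ψ') - ev Φ (ξof Ψ'))
    ring
  have hsmul : ∀ (t : 𝕜) (Ψ : U.vbV.Fib ⟨m, κ⟩), f0 (t • Ψ) = t * f0 Ψ := by
    intro t Ψ
    have hV'' : D.vbV.proj (D.vbV.smul t (ξof Ψ)) = ⟨m, X⟩ :=
      (D.vbV.proj_smul t _).trans (hξV Ψ)
    have hH'' : D.vbH.proj (D.vbV.smul t (ξof Ψ)) = U.vbH.proj (t • Ψ).val := by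
      rw [D.projH_smulV t (hξH Ψ)]
      exact (U.projH_smulV t (hxof Ψ)).symm
    rw [f0_spec (t • Ψ) _ hV'' hH'', VBOn.Fib.smul_val,
      hU.hat_smul t ((hξH Ψ).trans (hxof Ψ).symm), hW.ev_smulV hΦV t (hξV Ψ)]
    show _ = t * (ev' Ψ.val (ξof Ψ) - ev Φ (ξof Ψ))
    ring
  obtain ⟨Th, hTh, -⟩ := hZ.represent m κ
    { toFun := f0, map_add' := hadd, map_smul' := hsmul }
  refine ⟨Th.val, Th.prop.trans hΦH.symm, ?_⟩
  intro Ψ hΨ ξ hξV' hξH'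
  rw [hΦH] at hΨ
  rw [hΦV] at hξV'
  rw [hTh ⟨Ψ, hΨ⟩]
  exact f0_spec ⟨Ψ, hΨ⟩ ξ hξV' hξH'

omit hW hZ in
/-- The value of the bijectivity witness `c : U.CoreT m → (EH m)*`,
`c(Ψc)(Y) = ⟨Ψc, 0̃^V_Y⟩`, as a linear map. -/
noncomputable def coreDualMap (hU : IsHDualDVB D U ev') (m : M) :
    U.CoreT m →ₗ[𝕜] Module.Dual 𝕜 (EH m) where
  toFun Ψc :=
    { toFun := fun Y => ev' Ψc.val.val (D.vbV.zero ⟨m, Y⟩)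
      map_add' := fun Y Y' => by
        show ev' Ψc.val.val (D.vbV.zero ⟨m, Y + Y'⟩) = _
        rw [D.zeroV_add,
          hU.ev_addH (U.core_projH Ψc) (D.projH_zeroV m Y) (D.projH_zeroV m Y')]
      map_smul' := fun t Y => by
        show ev' Ψc.val.val (D.vbV.zero ⟨m, t • Y⟩)
          = t * ev' Ψc.val.val (D.vbV.zero ⟨m, Y⟩)
        rw [D.zeroV_smul, hU.ev_smulH (U.core_projH Ψc) t (D.projH_zeroV m Y)] }
  map_add' Ψc Ψc' := LinearMap.ext fun Y => by
    have hzz : D.vbV.add (D.vbV.zero ⟨m, Y⟩) (D.vbV.zero ⟨m, Y⟩)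
        = D.vbV.zero ⟨m, Y⟩ := by
      have h := D.vbV.zero_add (D.vbV.zero ⟨m, Y⟩)
      rwa [D.vbV.proj_zero] at h
    have h := hU.hat_add ((U.core_projV Ψc).trans (U.core_projV Ψc').symm)
      (rfl : D.vbV.proj (D.vbV.zero ⟨m, Y⟩) = D.vbV.proj (D.vbV.zero ⟨m, Y⟩))
      ((D.projH_zeroV m Y).trans (U.core_projH Ψc).symm)
      ((D.projH_zeroV m Y).trans (U.core_projH Ψc').symm)
    rw [hzz] at h
    exact h
  map_smul' t Ψc := LinearMap.ext fun Y => by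
    have hz : D.vbV.smul t (D.vbV.zero ⟨m, Y⟩) = D.vbV.zero ⟨m, Y⟩ :=
      D.vbV.smul_zero' t _
    have h := hU.hat_smul t ((D.projH_zeroV m Y).trans (U.core_projH Ψc).symm)
      (Ψ := Ψc.val.val) (ξ := D.vbV.zero ⟨m, Y⟩)
    rw [hz] at h
    exact h

omit hW hZ in
theorem coreDualMap_injective (m : M) :
    Function.Injective (coreDualMap hU m) := by
  rw [← LinearMap.ker_eq_bot, LinearMap.ker_eq_bot']
  intro Ψc hΨc
  have hv : ∀ ξ : E, D.vbH.proj ξ = ⟨m, (0 : EV m)⟩ →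
      ev' Ψc.val.val ξ = ev' (U.vbH.zero ⟨m, (0 : EV m)⟩) ξ := by
    intro ξ hξ
    obtain ⟨Y, hY⟩ := D.projV_over hξ
    obtain ⟨k, hk⟩ := D.coreH_decomp hY hξ
    rw [hk, hU.ev_addH (U.core_projH Ψc) (D.projH_zeroV m Y) k.prop]
    have t1 : ev' Ψc.val.val (D.vbV.zero ⟨m, Y⟩) = 0 := by
      have h := DFunLike.congr_fun hΨc Y
      exact (show coreDualMap hU m Ψc Y = 0 by simpa using h)
    have t2 : ev' Ψc.val.val k.val.val = 0 := by
      have h := hU.ev_core (U.core_projH Ψc) (U.core_projV Ψc) k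
      simpa using h
    rw [t1, t2, hU.zero_ev (hk ▸ hξ)]
    ring
  have h := hU.ext' (U.core_projH Ψc) (U.vbH.proj_zero _) hv
  apply Subtype.ext
  apply Subtype.ext
  show Ψc.val.val = U.vbV.zero ⟨m, 0⟩
  rw [h]
  exact (U.double_zero m).symm

omit hW hZ in
theorem coreDualMap_surjective (m : M) :
    Function.Surjective (coreDualMap hU m) := by
  intro φ
  have hXF : ∀ ξ : D.vbH.Fib ⟨m, (0 : EV m)⟩, ∃ Y : EH m,
      D.vbV.proj ξ.val = ⟨m, Y⟩ := fun ξ => D.projV_over ξ.prop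
  choose XF hXF using hXF
  have Xadd : ∀ ξ ξ' : D.vbH.Fib ⟨m, (0 : EV m)⟩,
      XF (ξ + ξ') = XF ξ + XF ξ' := by
    intro ξ ξ'
    have h := D.projV_addH (ξ.prop.trans ξ'.prop.symm) (hXF ξ) (hXF ξ')
    exact sigma_snd_eq ((hXF (ξ + ξ')).symm.trans h)
  have Xsmul : ∀ (t : 𝕜) (ξ : D.vbH.Fib ⟨m, (0 : EV m)⟩),
      XF (t • ξ) = t • XF ξ := by
    intro t ξ
    have h := D.projV_smulH t (hXF ξ)
    exact sigma_snd_eq ((hXF (t • ξ)).symm.trans h)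
  obtain ⟨Ph, hPh, -⟩ := hU.represent m 0
    { toFun := fun ξ => φ (XF ξ)
      map_add' := fun ξ ξ' => by
        show φ (XF (ξ + ξ')) = φ (XF ξ) + φ (XF ξ')
        rw [Xadd, map_add]
      map_smul' := fun t ξ => by
        show φ (XF (t • ξ)) = t * φ (XF ξ)
        rw [Xsmul, map_smul]
        rfl }
  obtain ⟨κ₀, hκ₀⟩ := U.projV_over Ph.prop
  have hκ0 : κ₀ = 0 := by
    ext k
    have h1 : ev' Ph.val k.val.val = κ₀ k := hU.ev_core Ph.prop hκ₀ k
    have h2 := hPh ⟨k.val.val, k.prop⟩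
    have h3 : XF ⟨k.val.val, k.prop⟩ = 0 :=
      sigma_snd_eq ((hXF _).symm.trans k.val.prop)
    have h4 : κ₀ k = φ (XF ⟨k.val.val, k.prop⟩) := h1.symm.trans h2
    rw [h3, map_zero] at h4
    simpa using h4
  rw [hκ0] at hκ₀
  refine ⟨⟨⟨Ph.val, hκ₀⟩, Ph.prop⟩, ?_⟩
  apply LinearMap.ext
  intro Y
  show ev' Ph.val (D.vbV.zero ⟨m, Y⟩) = φ Y
  have h2 : ev' Ph.val (D.vbV.zero ⟨m, Y⟩)
      = φ (XF ⟨D.vbV.zero ⟨m, Y⟩, D.projH_zeroV m Y⟩) :=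
    hPh ⟨D.vbV.zero ⟨m, Y⟩, D.projH_zeroV m Y⟩
  have h3 : XF ⟨D.vbV.zero ⟨m, Y⟩, D.projH_zeroV m Y⟩ = Y :=
    sigma_snd_eq ((hXF _).symm.trans (D.vbV.proj_zero _))
  rw [h2, h3]

/-- `θ` is injective. -/
theorem theta_inj [∀ m, FiniteDimensional 𝕜 (EH m)] {Φ Φ' : F} {Θ : F₂}
    (h1 : PairProp D W ev U ev' Z ev₂ Φ Θ)
    (h2 : PairProp D W ev U ev' Z ev₂ Φ' Θ) : Φ = Φ' := by
  rcases hΦV : W.vbV.proj Φ with ⟨m, X⟩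
  obtain ⟨κ, hΦH⟩ := W.compat Φ m X hΦV
  have hΦ'H : W.vbH.proj Φ' = ⟨m, κ⟩ := (h2.1.symm.trans h1.1).trans hΦH
  rcases hΦ'V : W.vbV.proj Φ' with ⟨m₂, X'⟩
  obtain ⟨κ₂, hκ₂⟩ := W.compat Φ' m₂ X' hΦ'V
  obtain ⟨hm2, -⟩ := Sigma.mk.inj_iff.mp (hΦ'H.symm.trans hκ₂)
  subst hm2
  obtain ⟨μ, hΘH⟩ := Z.compat Θ m κ (h1.1.trans hΦH)
  have mu1 := mu_spec hW hU hZ h1 hΦV hΦH hΘH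
  have mu2 := mu_spec hW hU hZ h2 hΦ'V hΦ'H hΘH
  have hXX : X = X' := by
    have hdual : ∀ φ : Module.Dual 𝕜 (EH m), φ (X - X') = 0 := by
      intro φ
      obtain ⟨Ψc, hΨc⟩ := coreDualMap_surjective hU m φ
      have e1 := (mu1 Ψc).symm.trans (mu2 Ψc)
      have eX : ev' Ψc.val.val (D.vbV.zero ⟨m, X⟩) = φ X := by rw [← hΨc]; rfl
      have eX' : ev' Ψc.val.val (D.vbV.zero ⟨m, X'⟩) = φ X' := by rw [← hΨc]; rfl
      rw [map_sub, ← eX, ← eX', e1]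
      ring
    have := (Module.forall_dual_apply_eq_zero_iff 𝕜 (X - X')).mp hdual
    exact sub_eq_zero.mp this
  subst hXX
  refine hW.ext' hΦV hΦ'V ?_
  intro ξ hξ
  obtain ⟨x, hx⟩ := D.compat ξ m X hξ
  obtain ⟨Ψ, hΨV, hΨH⟩ := U.double_surj m κ x
  have p1 := h1.2 Ψ (hΨV.trans hΦH.symm) ξ (hξ.trans hΦV.symm) (hx.trans hΨH.symm)
  have p2 := h2.2 Ψ (hΨV.trans hΦ'H.symm) ξ (hξ.trans hΦ'V.symm) (hx.trans hΨH.symm)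
  have h := p1.symm.trans p2
  linear_combination -h

omit hW in
/-- The value `ev' Ψ ξ - ev₂ Θ Ψ` does not depend on the choice of `Ψ`. -/
theorem wd2 {Θ : F₂} {m : M} {X : EH m} {κ : Module.Dual 𝕜 (D.CoreT m)}
    {μ : Module.Dual 𝕜 (U.CoreT m)}
    (hΘV : Z.vbV.proj Θ = ⟨m, κ⟩) (hΘH : Z.vbH.proj Θ = ⟨m, μ⟩)
    (hX : ∀ Ψc : U.CoreT m, μ Ψc = ev' Ψc.val.val (D.vbV.zero ⟨m, X⟩))
    {ξ : E} (hξV : D.vbV.proj ξ = ⟨m, X⟩) {x : EV m}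
    (hξH : D.vbH.proj ξ = ⟨m, x⟩)
    {Ψ₁ Ψ₂ : F'} (h1V : U.vbV.proj Ψ₁ = ⟨m, κ⟩) (h2V : U.vbV.proj Ψ₂ = ⟨m, κ⟩)
    (h1H : U.vbH.proj Ψ₁ = ⟨m, x⟩) (h2H : U.vbH.proj Ψ₂ = ⟨m, x⟩) :
    ev' Ψ₂ ξ - ev₂ Θ Ψ₂ = ev' Ψ₁ ξ - ev₂ Θ Ψ₁ := by
  obtain ⟨σ, hσV, hσH, hΨ₂⟩ := U.splitV h1V h2V h1H h2H
  rw [sub_self] at hσH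
  obtain ⟨Ψc, hΨc⟩ := U.coreH_decomp hσV hσH
  have e1 : ev₂ Θ Ψ₂ = ev₂ Θ Ψ₁ + ev₂ Θ σ := by
    rw [hΨ₂]; exact hZ.ev_addV hΘV h1V hσV
  have e2 : ev₂ Θ σ = ev' Ψc.val.val (D.vbV.zero ⟨m, X⟩) := by
    rw [hΨc, ← hZ.proj_hat hΘV hΘH Ψc]
    exact hX Ψc
  have hz : D.vbV.add ξ (D.vbV.zero ⟨m, X⟩) = ξ := D.vbV.add_zero' hξV
  have e3 : ev' Ψ₂ ξ = ev' Ψ₁ ξ + ev' σ (D.vbV.zero ⟨m, X⟩) := by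
    conv_lhs => rw [hΨ₂, ← hz]
    exact hU.hat_add (h1V.trans hσV.symm) (hξV.trans (D.vbV.proj_zero _).symm)
      (hξH.trans h1H.symm) ((D.projH_zeroV m X).trans hσH.symm)
  have e4 : ev' σ (D.vbV.zero ⟨m, X⟩) = ev' Ψc.val.val (D.vbV.zero ⟨m, X⟩) := by
    rw [hΨc, hU.addH_ev ((U.projH_zeroV m κ).trans (U.core_projH Ψc).symm)
      ((D.projH_zeroV m X).trans (U.projH_zeroV m κ).symm), hU.zeroV_ev_zeroV]
    ring
  rw [e1, e2, e3, e4]; ring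

/-- `θ` is surjective. -/
theorem theta_surj [∀ m, FiniteDimensional 𝕜 (EH m)] (Θ : F₂) :
    ∃ Φ : F, PairProp D W ev U ev' Z ev₂ Φ Θ := by
  rcases hΘV : Z.vbV.proj Θ with ⟨m, κ⟩
  obtain ⟨μ, hΘH⟩ := Z.compat Θ m κ hΘV
  set cE := LinearEquiv.ofBijective (coreDualMap hU m)
    ⟨coreDualMap_injective hU m, coreDualMap_surjective hU m⟩ with hcE
  set X := (Module.evalEquiv 𝕜 (EH m)).symm
    (μ ∘ₗ (cE.symm : Module.Dual 𝕜 (EH m) →ₗ[𝕜] U.CoreT m)) with hXdef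
  have hX : ∀ Ψc : U.CoreT m, μ Ψc = ev' Ψc.val.val (D.vbV.zero ⟨m, X⟩) := by
    intro Ψc
    have key := Module.apply_evalEquiv_symm_apply (R := 𝕜) (M := EH m)
      (coreDualMap hU m Ψc)
      (μ ∘ₗ (cE.symm : Module.Dual 𝕜 (EH m) →ₗ[𝕜] U.CoreT m))
    rw [← hXdef] at key
    have h3 : cE.symm (coreDualMap hU m Ψc) = Ψc := by
      have hc : coreDualMap hU m Ψc = cE Ψc := rfl
      rw [hc, cE.symm_apply_apply]
    calc μ Ψc
        = (μ ∘ₗ (cE.symm : Module.Dual 𝕜 (EH m) →ₗ[𝕜] U.CoreT m))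
            (coreDualMap hU m Ψc) := by
          rw [LinearMap.comp_apply, LinearEquiv.coe_coe, h3]
      _ = (coreDualMap hU m Ψc) X := key.symm
      _ = ev' Ψc.val.val (D.vbV.zero ⟨m, X⟩) := rfl
  -- construct the functional on the fibre of `E` over `X`
  have hxe : ∀ ξ : D.vbV.Fib ⟨m, X⟩, ∃ x : EV m, D.vbH.proj ξ.val = ⟨m, x⟩ :=
    fun ξ => D.compat ξ.val m X ξ.prop
  choose xof hxof using hxe
  have hPs : ∀ ξ : D.vbV.Fib ⟨m, X⟩, ∃ Ψ : F',
      U.vbV.proj Ψ = ⟨m, κ⟩ ∧ U.vbH.proj Ψ = ⟨m, xof ξ⟩ :=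
    fun ξ => U.double_surj m κ (xof ξ)
  choose Ψof hΨV hΨH using hPs
  set g0 : D.vbV.Fib ⟨m, X⟩ → 𝕜 :=
    fun ξ => ev' (Ψof ξ) ξ.val - ev₂ Θ (Ψof ξ) with hg0
  have g0_spec : ∀ (ξ : D.vbV.Fib ⟨m, X⟩) (Ψ : F'), U.vbV.proj Ψ = ⟨m, κ⟩ →
      U.vbH.proj Ψ = ⟨m, xof ξ⟩ → g0 ξ = ev' Ψ ξ.val - ev₂ Θ Ψ :=
    fun ξ Ψ hV hH =>
      wd2 hU hZ hΘV hΘH hX ξ.prop (hxof ξ) hV (hΨV ξ) hH (hΨH ξ)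
  have hadd : ∀ ξ ξ' : D.vbV.Fib ⟨m, X⟩, g0 (ξ + ξ') = g0 ξ + g0 ξ' := by
    intro ξ ξ'
    have hxsum : xof (ξ + ξ') = xof ξ + xof ξ' := by
      have h := D.projH_addV (ξ.prop.trans ξ'.prop.symm) (hxof ξ) (hxof ξ')
      exact sigma_snd_eq ((hxof (ξ + ξ')).symm.trans h)
    have hΨV'' : U.vbV.proj (U.vbV.add (Ψof ξ) (Ψof ξ')) = ⟨m, κ⟩ :=
      (U.vbV.proj_add ((hΨV ξ).trans (hΨV ξ').symm)).trans (hΨV ξ)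
    have hΨH'' : U.vbH.proj (U.vbV.add (Ψof ξ) (Ψof ξ')) = ⟨m, xof (ξ + ξ')⟩ := by
      rw [U.projH_addV ((hΨV ξ).trans (hΨV ξ').symm) (hΨH ξ) (hΨH ξ'), hxsum]
    rw [g0_spec (ξ + ξ') _ hΨV'' hΨH'', VBOn.Fib.add_val,
      hU.hat_add ((hΨV ξ).trans (hΨV ξ').symm) (ξ.prop.trans ξ'.prop.symm)
        ((hxof ξ).trans (hΨH ξ).symm) ((hxof ξ').trans (hΨH ξ').symm),
      hZ.ev_addV hΘV (hΨV ξ) (hΨV ξ')]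
    show _ = ev' (Ψof ξ) ξ.val - ev₂ Θ (Ψof ξ) + (ev' (Ψof ξ') ξ'.val - ev₂ Θ (Ψof ξ'))
    ring
  have hsmul : ∀ (t : 𝕜) (ξ : D.vbV.Fib ⟨m, X⟩), g0 (t • ξ) = t * g0 ξ := by
    intro t ξ
    have hxs : xof (t • ξ) = t • xof ξ := by
      have h := D.projH_smulV t (hxof ξ)
      exact sigma_snd_eq ((hxof (t • ξ)).symm.trans h)
    have hΨV'' : U.vbV.proj (U.vbV.smul t (Ψof ξ)) = ⟨m, κ⟩ :=
      (U.vbV.proj_smul t _).trans (hΨV ξ)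
    have hΨH'' : U.vbH.proj (U.vbV.smul t (Ψof ξ)) = ⟨m, xof (t • ξ)⟩ := by
      rw [U.projH_smulV t (hΨH ξ), hxs]
    rw [g0_spec (t • ξ) _ hΨV'' hΨH'', VBOn.Fib.smul_val,
      hU.hat_smul t ((hxof ξ).trans (hΨH ξ).symm), hZ.ev_smulV hΘV t (hΨV ξ)]
    show _ = t * (ev' (Ψof ξ) ξ.val - ev₂ Θ (Ψof ξ))
    ring
  obtain ⟨Ph, hPh, -⟩ := hW.represent m X
    { toFun := g0, map_add' := hadd, map_smul' := hsmul }
  obtain ⟨κ', hκ'⟩ := W.compat Ph.val m X Ph.prop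
  have hκκ : κ' = κ := by
    ext k
    set ξk : E := D.vbH.add (D.vbV.zero ⟨m, X⟩) k.val.val with hξk
    have hξkV : D.vbV.proj ξk = ⟨m, X⟩ := D.zeroV_addH_core_mem X k
    have hξkH : D.vbH.proj ξk = ⟨m, (0 : EV m)⟩ :=
      (D.vbH.proj_add ((D.projH_zeroV m X).trans k.prop.symm)).trans
        (D.projH_zeroV m X)
    have h1 : κ' k = ev Ph.val ξk := hW.proj_hat Ph.prop hκ' k
    have h2 : ev Ph.val ξk = g0 ⟨ξk, hξkV⟩ := hPh ⟨ξk, hξkV⟩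
    have hx0 : xof ⟨ξk, hξkV⟩ = 0 :=
      sigma_snd_eq ((hxof ⟨ξk, hξkV⟩).symm.trans hξkH)
    have h3 : g0 ⟨ξk, hξkV⟩
        = ev' (U.vbV.zero ⟨m, κ⟩) ξk - ev₂ Θ (U.vbV.zero ⟨m, κ⟩) :=
      g0_spec _ _ (U.vbV.proj_zero _)
        ((U.projH_zeroV m κ).trans (congrArg (Sigma.mk m) hx0.symm))
    have h4 : ev₂ Θ (U.vbV.zero ⟨m, κ⟩) = 0 := hZ.ev_zeroV hΘV
    have h5 : ev' (U.vbV.zero ⟨m, κ⟩) ξk = κ k := by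
      rw [hξk, hU.ev_addH (U.projH_zeroV m κ) (D.projH_zeroV m X) k.prop,
        hU.zeroV_ev_zeroV,
        hU.ev_core (U.projH_zeroV m κ) (U.vbV.proj_zero _) k]
      ring
    rw [h1, h2, h3, h4, h5]
    ring
  rw [hκκ] at hκ'
  refine ⟨Ph.val, hΘV.trans hκ'.symm, ?_⟩
  intro Ψ hΨ ξ hξV hξH
  rw [hκ'] at hΨ
  rw [Ph.prop] at hξV
  have h2 : ev Ph.val ξ = g0 ⟨ξ, hξV⟩ := hPh ⟨ξ, hξV⟩
  have h3 : g0 ⟨ξ, hξV⟩ = ev' Ψ ξ - ev₂ Θ Ψ := by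
    obtain ⟨x, hx⟩ := U.compat Ψ m κ hΨ
    have hxe : xof ⟨ξ, hξV⟩ = x :=
      sigma_snd_eq ((hxof ⟨ξ, hξV⟩).symm.trans (hξH.trans hx))
    exact g0_spec ⟨ξ, hξV⟩ Ψ hΨ (hx.trans (congrArg (Sigma.mk m) hxe.symm))
  have hfin := h2.trans h3
  linear_combination hfin

/-- compatibility of `θ` with addition over `E^H`. -/
theorem pair_addV {Φ Φ' : F} {A A' : F₂}
    (hPA : PairProp D W ev U ev' Z ev₂ Φ A)
    (hPA' : PairProp D W ev U ev' Z ev₂ Φ' A')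
    (hVeq : W.vbV.proj Φ = W.vbV.proj Φ') :
    PairProp D W ev U ev' Z ev₂ (W.vbV.add Φ Φ') (Z.vbH.add A A') := by
  rcases hV : W.vbV.proj Φ with ⟨m, X⟩
  have hV' : W.vbV.proj Φ' = ⟨m, X⟩ := hVeq.symm.trans hV
  obtain ⟨κ, hH⟩ := W.compat Φ m X hV
  obtain ⟨κ', hH'⟩ := W.compat Φ' m X hV'
  have hAV : Z.vbV.proj A = ⟨m, κ⟩ := hPA.1.trans hH
  have hA'V : Z.vbV.proj A' = ⟨m, κ'⟩ := hPA'.1.trans hH'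
  obtain ⟨μ, hAH⟩ := Z.compat A m κ hAV
  obtain ⟨μ', hA'H⟩ := Z.compat A' m κ' hA'V
  have hμ := mu_spec hW hU hZ hPA hV hH hAH
  have hμ' := mu_spec hW hU hZ hPA' hV' hH' hA'H
  have hμμ : μ = μ' := LinearMap.ext fun Ψc => (hμ Ψc).trans (hμ' Ψc).symm
  have hHeq : Z.vbH.proj A = Z.vbH.proj A' := by rw [hAH, hA'H, hμμ]
  constructor
  · rw [Z.projV_addH hHeq hAV hA'V, W.projH_addV hVeq hH hH']
  intro Ψ hΨ ξ hξV hξH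
  rw [W.projH_addV hVeq hH hH'] at hΨ
  rw [W.vbV.proj_add hVeq, hV] at hξV
  obtain ⟨x, hΨx⟩ := U.compat Ψ m (κ + κ') hΨ
  have hξH' : D.vbH.proj ξ = ⟨m, x⟩ := hξH.trans hΨx
  obtain ⟨Ψ₁, hΨ₁V, hΨ₁H⟩ := U.double_surj m κ x
  obtain ⟨Ψ₂, hΨ₂H, hΨ₂V, hΨdec⟩ := U.splitH hΨ₁H hΨx hΨ₁V hΨ
  rw [add_sub_cancel_left] at hΨ₂V
  rw [hΨdec,
    hZ.hat_add hHeq (hΨ₁H.trans hΨ₂H.symm) (hΨ₁V.trans hAV.symm)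
      (hΨ₂V.trans hA'V.symm),
    hPA.2 Ψ₁ (hΨ₁V.trans hH.symm) ξ (hξV.trans hV.symm) (hξH'.trans hΨ₁H.symm),
    hPA'.2 Ψ₂ (hΨ₂V.trans hH'.symm) ξ (hξV.trans hV'.symm) (hξH'.trans hΨ₂H.symm),
    hU.addH_ev (hΨ₁H.trans hΨ₂H.symm) (hξH'.trans hΨ₁H.symm),
    hW.addV_ev hVeq (hξV.trans hV.symm)]
  ring

/-- compatibility of `θ` with scalar multiplication over `E^H`. -/
theorem pair_smulV {Φ : F} {A : F₂} (hPA : PairProp D W ev U ev' Z ev₂ Φ A)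
    (t : 𝕜) : PairProp D W ev U ev' Z ev₂ (W.vbV.smul t Φ) (Z.vbH.smul t A) := by
  rcases hV : W.vbV.proj Φ with ⟨m, X⟩
  obtain ⟨κ, hH⟩ := W.compat Φ m X hV
  have hAV : Z.vbV.proj A = ⟨m, κ⟩ := hPA.1.trans hH
  constructor
  · rw [Z.projV_smulH t hAV, W.projH_smulV t hH]
  intro Ψ hΨ ξ hξV hξH
  rw [W.projH_smulV t hH] at hΨ
  rw [W.vbV.proj_smul, hV] at hξV
  have hev : ev (W.vbV.smul t Φ) ξ = t * ev Φ ξ :=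
    hW.smulV_ev t (hξV.trans hV.symm)
  by_cases ht : t = 0
  · subst ht
    obtain ⟨μ, hAH⟩ := Z.compat A m κ hAV
    have hμ := mu_spec hW hU hZ hPA hV hH hAH
    have hΨ0 : U.vbV.proj Ψ = ⟨m, (0 : Module.Dual 𝕜 (D.CoreT m))⟩ := by
      rw [hΨ, zero_smul]
    obtain ⟨x, hΨx⟩ := U.compat Ψ m 0 hΨ0
    have hξH' : D.vbH.proj ξ = ⟨m, x⟩ := hξH.trans hΨx
    obtain ⟨Ψc, hΨc⟩ := U.coreV_decomp hΨ0 hΨx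
    have hz : Z.vbH.smul 0 A = Z.vbH.zero ⟨m, μ⟩ := by
      rw [Z.vbH.zero_smul', hAH]
    rw [hz, hev, zero_mul, hΨc,
      hZ.ev_addV (Z.projV_zeroH m μ) (U.projV_zeroH m x) (U.core_projV Ψc),
      hZ.zeroH_ev_zeroH,
      hZ.ev_core (Z.projV_zeroH m μ) (Z.vbH.proj_zero _) Ψc, hμ Ψc]
    have hadd0 : D.vbV.add ξ (D.vbV.zero ⟨m, X⟩) = ξ := D.vbV.add_zero' hξV
    have hsplit : ev' (U.vbV.add (U.vbH.zero ⟨m, x⟩) Ψc.val.val) ξ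
        = ev' (U.vbH.zero ⟨m, x⟩) ξ + ev' Ψc.val.val (D.vbV.zero ⟨m, X⟩) := by
      conv_lhs => rw [← hadd0]
      exact hU.hat_add ((U.projV_zeroH m x).trans (U.core_projV Ψc).symm)
        (hξV.trans (D.vbV.proj_zero _).symm)
        (hξH'.trans (U.vbH.proj_zero _).symm)
        ((D.projH_zeroV m X).trans (U.core_projH Ψc).symm)
    rw [hsplit, hU.zero_ev hξH']
    ring
  · have hΨ₁V : U.vbV.proj (U.vbH.smul t⁻¹ Ψ) = ⟨m, κ⟩ := by
      rw [U.projV_smulH t⁻¹ hΨ, smul_smul, inv_mul_cancel₀ ht, one_smul]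
    have hΨeq : U.vbH.smul t (U.vbH.smul t⁻¹ Ψ) = Ψ := by
      rw [← U.vbH.mul_smul, mul_inv_cancel₀ ht, U.vbH.one_smul]
    have hΨ₁H : U.vbH.proj (U.vbH.smul t⁻¹ Ψ) = U.vbH.proj Ψ := U.vbH.proj_smul _ _
    have h1 : ev₂ (Z.vbH.smul t A) Ψ = t * ev₂ A (U.vbH.smul t⁻¹ Ψ) := by
      conv_lhs => rw [← hΨeq]
      exact hZ.hat_smul t (hΨ₁V.trans hAV.symm)
    have h2 : ev' Ψ ξ = t * ev' (U.vbH.smul t⁻¹ Ψ) ξ := by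
      conv_lhs => rw [← hΨeq]
      exact hU.smulH_ev t (hξH.trans hΨ₁H.symm)
    rw [h1, h2, hev,
      hPA.2 _ (hΨ₁V.trans hH.symm) ξ (hξV.trans hV.symm) (hξH.trans hΨ₁H.symm)]
    ring

/-- compatibility of `θ` with addition over `K*`. -/
theorem pair_addH {Φ Φ' : F} {A A' : F₂}
    (hPA : PairProp D W ev U ev' Z ev₂ Φ A)
    (hPA' : PairProp D W ev U ev' Z ev₂ Φ' A')
    (hHeq : W.vbH.proj Φ = W.vbH.proj Φ') :
    PairProp D W ev U ev' Z ev₂ (W.vbH.add Φ Φ') (Z.vbV.add A A') := by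
  rcases hV : W.vbV.proj Φ with ⟨m, X⟩
  obtain ⟨κ, hH⟩ := W.compat Φ m X hV
  have hH' : W.vbH.proj Φ' = ⟨m, κ⟩ := hHeq.symm.trans hH
  rcases hV' : W.vbV.proj Φ' with ⟨m₂, X'⟩
  obtain ⟨κ₂, hκ₂⟩ := W.compat Φ' m₂ X' hV'
  obtain ⟨hm2, -⟩ := Sigma.mk.inj_iff.mp (hH'.symm.trans hκ₂)
  subst hm2
  have hAV : Z.vbV.proj A = ⟨m, κ⟩ := hPA.1.trans hH
  have hA'V : Z.vbV.proj A' = ⟨m, κ⟩ := hPA'.1.trans hH'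
  constructor
  · rw [(Z.vbV.proj_add (hAV.trans hA'V.symm)).trans hAV,
      (W.vbH.proj_add hHeq).trans hH]
  intro Ψ hΨ ξ hξV hξH
  rw [(W.vbH.proj_add hHeq).trans hH] at hΨ
  rw [W.projV_addH hHeq hV hV'] at hξV
  obtain ⟨x, hΨx⟩ := U.compat Ψ m κ hΨ
  have hξH' : D.vbH.proj ξ = ⟨m, x⟩ := hξH.trans hΨx
  obtain ⟨ξ₁, hξ₁V, hξ₁H⟩ := D.double_surj m X x
  obtain ⟨ξ₂, hξ₂H, hξ₂V, hξdec⟩ := D.splitH hξ₁H hξH' hξ₁V hξV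
  rw [add_sub_cancel_left] at hξ₂V
  rw [hξdec,
    hZ.addV_ev (hAV.trans hA'V.symm) (hΨ.trans hAV.symm),
    hPA.2 Ψ (hΨ.trans hH.symm) ξ₁ (hξ₁V.trans hV.symm) (hξ₁H.trans hΨx.symm),
    hPA'.2 Ψ (hΨ.trans hH'.symm) ξ₂ (hξ₂V.trans hV'.symm) (hξ₂H.trans hΨx.symm),
    hU.ev_addH hΨx hξ₁H hξ₂H,
    hW.hat_add hHeq (hξ₁H.trans hξ₂H.symm) (hξ₁V.trans hV.symm)
      (hξ₂V.trans hV'.symm)]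
  ring

/-- compatibility of `θ` with scalar multiplication over `K*`. -/
theorem pair_smulH {Φ : F} {A : F₂} (hPA : PairProp D W ev U ev' Z ev₂ Φ A)
    (t : 𝕜) : PairProp D W ev U ev' Z ev₂ (W.vbH.smul t Φ) (Z.vbV.smul t A) := by
  rcases hV : W.vbV.proj Φ with ⟨m, X⟩
  obtain ⟨κ, hH⟩ := W.compat Φ m X hV
  have hAV : Z.vbV.proj A = ⟨m, κ⟩ := hPA.1.trans hH
  constructor
  · rw [(Z.vbV.proj_smul t A).trans hAV, (W.vbH.proj_smul t Φ).trans hH]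
  intro Ψ hΨ ξ hξV hξH
  rw [(W.vbH.proj_smul t Φ).trans hH] at hΨ
  rw [W.projV_smulH t hV] at hξV
  obtain ⟨x, hΨx⟩ := U.compat Ψ m κ hΨ
  have hξH' : D.vbH.proj ξ = ⟨m, x⟩ := hξH.trans hΨx
  have h0 : ev₂ (Z.vbV.smul t A) Ψ = t * ev₂ A Ψ :=
    hZ.smulV_ev t (hΨ.trans hAV.symm)
  by_cases ht : t = 0
  · subst ht
    rw [zero_smul] at hξV
    obtain ⟨k, hk⟩ := D.coreV_decomp hξV hξH'
    have hΦ0 : W.vbH.smul 0 Φ = W.vbH.zero ⟨m, κ⟩ := by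
      rw [W.vbH.zero_smul', hH]
    have hadd0 : U.vbV.add Ψ (U.vbV.zero ⟨m, κ⟩) = Ψ := U.vbV.add_zero' hΨ
    have hsplit : ev' Ψ ξ = ev' Ψ (D.vbH.zero ⟨m, x⟩) + ev' (U.vbV.zero ⟨m, κ⟩) k.val.val := by
      conv_lhs => rw [← hadd0, hk]
      exact hU.hat_add (hΨ.trans (U.vbV.proj_zero _).symm)
        ((D.projV_zeroH m x).trans (D.core_projV k).symm)
        ((D.vbH.proj_zero _).trans hΨx.symm)
        ((D.core_projH k).trans (U.projH_zeroV m κ).symm)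
    have hev0 : ev (W.vbH.zero ⟨m, κ⟩) ξ
        = ev (W.vbH.zero ⟨m, κ⟩) (D.vbH.zero ⟨m, x⟩)
          + ev (W.vbH.zero ⟨m, κ⟩) k.val.val := by
      rw [hk]
      exact hW.ev_addV (W.projV_zeroH m κ) (D.projV_zeroH m x) (D.core_projV k)
    rw [h0, zero_mul, hΦ0, hev0, hsplit, hU.ev_zeroH hΨx,
      hU.ev_core (U.projH_zeroV m κ) (U.vbV.proj_zero _) k,
      hW.zeroH_ev_zeroH,
      hW.ev_core (W.projV_zeroH m κ) (W.vbH.proj_zero _) k]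
    ring
  · have hξ₁V : D.vbV.proj (D.vbH.smul t⁻¹ ξ) = ⟨m, X⟩ := by
      rw [D.projV_smulH t⁻¹ hξV, smul_smul, inv_mul_cancel₀ ht, one_smul]
    have hξeq : D.vbH.smul t (D.vbH.smul t⁻¹ ξ) = ξ := by
      rw [← D.vbH.mul_smul, mul_inv_cancel₀ ht, D.vbH.one_smul]
    have hξ₁H : D.vbH.proj (D.vbH.smul t⁻¹ ξ) = D.vbH.proj ξ := D.vbH.proj_smul _ _
    have h1 : ev (W.vbH.smul t Φ) ξ = t * ev Φ (D.vbH.smul t⁻¹ ξ) := by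
      conv_lhs => rw [← hξeq]
      exact hW.hat_smul t (hξ₁V.trans hV.symm)
    have h2 : ev' Ψ ξ = t * ev' Ψ (D.vbH.smul t⁻¹ ξ) := by
      conv_lhs => rw [← hξeq]
      exact hU.ev_smulH hΨx t (hξ₁H.trans hξH')
    rw [h0, h1, h2,
      hPA.2 Ψ (hΨ.trans hH.symm) _ (hξ₁V.trans hV.symm)
        (hξ₁H.trans hξH)]
    ring

/-- `θ` is `-id` on the cores. -/
theorem pair_core {Φ : F} {A : F₂} (hPA : PairProp D W ev U ev' Z ev₂ Φ A)
    {m : M} (hΦV : W.vbV.proj Φ = ⟨m, (0 : EH m)⟩)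
    (hΦH : W.vbH.proj Φ = ⟨m, (0 : Module.Dual 𝕜 (D.CoreT m))⟩)
    (ψ : Module.Dual 𝕜 (EV m))
    (hψ : ∀ (x : EV m) (k : D.CoreT m),
      ev Φ (D.vbV.add (D.vbH.zero ⟨m, x⟩) k.val.val) = ψ x)
    (x : EV m) (kU : U.CoreT m) :
    ev₂ A (U.vbV.add (U.vbH.zero ⟨m, x⟩) kU.val.val) = - ψ x := by
  have hΨV : U.vbV.proj (U.vbV.add (U.vbH.zero ⟨m, x⟩) kU.val.val)
      = ⟨m, (0 : Module.Dual 𝕜 (D.CoreT m))⟩ :=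
    (U.vbV.proj_add ((U.projV_zeroH m x).trans (U.core_projV kU).symm)).trans
      (U.projV_zeroH m x)
  have hΨH : U.vbH.proj (U.vbV.add (U.vbH.zero ⟨m, x⟩) kU.val.val) = ⟨m, x⟩ :=
    U.zeroH_addV_core_mem x kU
  have hp := hPA.2 _ (hΨV.trans hΦH.symm) (D.vbH.zero ⟨m, x⟩)
    ((D.projV_zeroH m x).trans hΦV.symm)
    ((D.vbH.proj_zero _).trans hΨH.symm)
  have he1 : ev Φ (D.vbH.zero ⟨m, x⟩) = ψ x := by
    have h := hψ x 0
    have hz : (0 : D.CoreT m).val.val = D.vbV.zero ⟨m, (0 : EH m)⟩ := rfl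
    rw [hz, D.vbV.add_zero' (D.projV_zeroH m x)] at h
    exact h
  have hadd0 : D.vbV.add (D.vbH.zero ⟨m, x⟩) (D.vbV.zero ⟨m, (0 : EH m)⟩)
      = D.vbH.zero ⟨m, x⟩ := D.vbV.add_zero' (D.projV_zeroH m x)
  have he2 : ev' (U.vbV.add (U.vbH.zero ⟨m, x⟩) kU.val.val) (D.vbH.zero ⟨m, x⟩)
      = 0 := by
    conv_lhs => rw [← hadd0]
    rw [hU.hat_add ((U.projV_zeroH m x).trans (U.core_projV kU).symm)
      ((D.projV_zeroH m x).trans (D.vbV.proj_zero _).symm)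
      ((D.vbH.proj_zero _).trans (U.vbH.proj_zero _).symm)
      ((D.projH_zeroV m 0).trans (U.core_projH kU).symm)]
    have t1 : ev' (U.vbH.zero ⟨m, x⟩) (D.vbH.zero ⟨m, x⟩) = 0 :=
      hU.ev_zeroH (U.vbH.proj_zero _)
    have t2 : ev' kU.val.val (D.vbV.zero ⟨m, (0 : EH m)⟩) = 0 := by
      have h := hU.ev_core (U.core_projH kU) (U.core_projV kU) (0 : D.CoreT m)
      simpa using h
    rw [t1, t2]
    ring
  rw [hp, he1, he2]
  ring

end Main

/-- Suppose all fibres of the double vector bundle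
`(E; E^H, E^V; M)` are finite-dimensional. Let `(W, ev)` be its vertical dual
`(E^{*V}; E^H, K*; M)`, `(U, ev')` its horizontal dual `(E^{*H}; K*, E^V; M)`, and
`(Z, ev₂)` the vertical dual of `E^{*H}` taken over `K*` (whose side
`(E^H)**` is identified with `E^H`).  Then the pairing
`⟨Φ, Ψ⟩ = ⟨Ψ, ξ⟩ − ⟨Φ, ξ⟩` induces an isomorphism of double vector bundles
`θ : E^{*V} → (E^{*H})^{*V}` which is the identity on the side bundles `K*` and
`E^H`, but `−id` on the cores `(E^V)*`. -/
theorem dvb_dual_of_dual_iso {𝕜 M E : Type*} [Field 𝕜] {EH EV : M → Type*}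
    [∀ m, AddCommGroup (EH m)] [∀ m, Module 𝕜 (EH m)]
    [∀ m, AddCommGroup (EV m)] [∀ m, Module 𝕜 (EV m)]
    (D : DVB 𝕜 E EH EV)
    [∀ m, FiniteDimensional 𝕜 (EH m)] [∀ m, FiniteDimensional 𝕜 (EV m)]
    [∀ p : Σ m, EH m, FiniteDimensional 𝕜 (D.vbV.Fib p)]
    {F F' F₂ : Type*}
    (W : DVB 𝕜 F EH (fun m => Module.Dual 𝕜 (D.CoreT m))) (ev : F → E → 𝕜)
    (hW : IsVDualDVB D W ev)
    (U : DVB 𝕜 F' (fun m => Module.Dual 𝕜 (D.CoreT m)) EV) (ev' : F' → E → 𝕜)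
    (hU : IsHDualDVB D U ev')
    (Z : DVB 𝕜 F₂ (fun m => Module.Dual 𝕜 (D.CoreT m))
      (fun m => Module.Dual 𝕜 (U.CoreT m)))
    (ev₂ : F₂ → F' → 𝕜) (hZ : IsVDualDVB U Z ev₂) :
    ∃ θ : F → F₂,
      Function.Bijective θ ∧
      -- `θ` realizes the pairing `⟨Φ, Ψ⟩ = ⟨Ψ, ξ⟩ − ⟨Φ, ξ⟩`:
      (∀ (Φ : F) (Ψ : F'), U.vbV.proj Ψ = W.vbH.proj Φ →
        ∀ (ξ : E), D.vbV.proj ξ = W.vbV.proj Φ → D.vbH.proj ξ = U.vbH.proj Ψ →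
          ev₂ (θ Φ) Ψ = ev' Ψ ξ - ev Φ ξ) ∧
      -- `θ` is the identity on the side bundle `K*`:
      (∀ Φ : F, Z.vbV.proj (θ Φ) = W.vbH.proj Φ) ∧
      -- `θ` is the identity on the side bundle `E^H` (identified with `(E^H)**`
      -- via the canonical map `X ↦ (Φ_c ↦ ⟨Φ_c, 0̃^V_X⟩)` on the core of `E^{*H}`):
      (∀ {m : M} {X : EH m} (Φ : F), W.vbV.proj Φ = ⟨m, X⟩ →
        ∀ {μ : Module.Dual 𝕜 (U.CoreT m)}, Z.vbH.proj (θ Φ) = ⟨m, μ⟩ →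
        ∀ Ψc : U.CoreT m, μ Ψc = ev' Ψc.val.val (D.vbV.zero ⟨m, X⟩)) ∧
      -- `θ` is linear for the bundle structures over `E^H`:
      (∀ {Φ Φ' : F}, W.vbV.proj Φ = W.vbV.proj Φ' →
        θ (W.vbV.add Φ Φ') = Z.vbH.add (θ Φ) (θ Φ')) ∧
      (∀ (t : 𝕜) (Φ : F), θ (W.vbV.smul t Φ) = Z.vbH.smul t (θ Φ)) ∧
      -- `θ` is linear for the bundle structures over `K*`:
      (∀ {Φ Φ' : F}, W.vbH.proj Φ = W.vbH.proj Φ' →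
        θ (W.vbH.add Φ Φ') = Z.vbV.add (θ Φ) (θ Φ')) ∧
      (∀ (t : 𝕜) (Φ : F), θ (W.vbH.smul t Φ) = Z.vbV.smul t (θ Φ)) ∧
      -- `θ` is `−id` on the cores `(E^V)*`: if `Φ` is the core element of `E^{*V}`
      -- corresponding to `ψ ∈ (E^V_m)*`, then `θ Φ` is the core element of
      -- `(E^{*H})^{*V}` corresponding to `−ψ`:
      (∀ {m : M} (Φ : F), W.vbV.proj Φ = ⟨m, (0 : EH m)⟩ →
        W.vbH.proj Φ = ⟨m, (0 : Module.Dual 𝕜 (D.CoreT m))⟩ →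
        ∀ (ψ : Module.Dual 𝕜 (EV m)),
        (∀ (x : EV m) (k : D.CoreT m),
          ev Φ (D.vbV.add (D.vbH.zero ⟨m, x⟩) k.val.val) = ψ x) →
        ∀ (x : EV m) (kU : U.CoreT m),
          ev₂ (θ Φ) (U.vbV.add (U.vbH.zero ⟨m, x⟩) kU.val.val) = - ψ x) := by
    classical
  choose θ hθ using fun Φ => exists_theta hW hU hZ Φ
  refine ⟨θ, ⟨?_, ?_⟩, ?_, ?_, ?_, ?_, ?_, ?_, ?_, ?_⟩
  · -- injective
    intro Φ Φ' h
    have h2 := hθ Φ'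
    rw [← h] at h2
    exact theta_inj hW hU hZ (hθ Φ) h2
  · -- surjective
    intro Θ
    obtain ⟨Φ, hP⟩ := theta_surj hW hU hZ Θ
    exact ⟨Φ, pairProp_unique hW hU hZ (hθ Φ) hP⟩
  · -- pairing
    intro Φ Ψ h1 ξ h2 h3
    exact (hθ Φ).2 Ψ h1 ξ h2 h3
  · -- projection to K*
    intro Φ
    exact (hθ Φ).1
  · -- horizontal projection
    intro m X Φ hΦV μ hΘH Ψc
    obtain ⟨κ, hΦH⟩ := W.compat Φ m X hΦV
    exact mu_spec hW hU hZ (hθ Φ) hΦV hΦH hΘH Ψc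
  · -- additivity over E^H
    intro Φ Φ' hVeq
    exact pairProp_unique hW hU hZ (hθ _)
      (pair_addV hW hU hZ (hθ Φ) (hθ Φ') hVeq)
  · -- scalar multiplication over E^H
    intro t Φ
    exact pairProp_unique hW hU hZ (hθ _) (pair_smulV hW hU hZ (hθ Φ) t)
  · -- additivity over K*
    intro Φ Φ' hHeq
    exact pairProp_unique hW hU hZ (hθ _)
      (pair_addH hW hU hZ (hθ Φ) (hθ Φ') hHeq)
  · -- scalar multiplication over K*
    intro t Φ
    exact pairProp_unique hW hU hZ (hθ _) (pair_smulH hW hU hZ (hθ Φ) t)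
  · -- -id on cores
    intro m Φ hΦV hΦH ψ hψ x kU
    exact pair_core hW hU hZ (hθ Φ) hΦV hΦH ψ hψ x kU
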